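/- Let T be a connected finite Γ-colored d-complete poset with Γ simply laced such that Ch(T) = T (so T equals its own top tree and each color occurs exactly once). Suppose s ∈ T covers exactly two elements of T and every element of T other than s covers at most one element of T. Then for every b ∈ Γ, L_b(T) ≤ 2, and for c ∈ Γ, L_c(T) = 2 if and only if c = κ(s). -/

import Mathlib

/-!
Common definitions: Dynkin diagram data, Γ-colored posets, and the coloring
properties EC, NA, AC, ICE2, UCB1, LCB1 from the paper, together with
Γ-colored d-complete and Γ-colored minuscule posets, top trees, slant
irreducibility, extensions, lower frontier censuses, and full heaps.
-/

universe u v w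

variable {Γ : Type u} {P : Type v}

/-- The integers `θ a b` form a Dynkin diagram datum. -/
def DynkinDatum (θ : Γ → Γ → ℤ) : Prop :=
  (∀ a : Γ, θ a a = 2) ∧ (∀ a b : Γ, a ≠ b → θ a b ≤ 0) ∧
    (∀ a b : Γ, a ≠ b → (θ a b = 0 ↔ θ b a = 0))

/-- Colors `a` and `b` are adjacent. -/
def AdjColor (θ : Γ → Γ → ℤ) (a b : Γ) : Prop := θ a b < 0

/-- The Dynkin diagram is simply laced. -/
def SimplyLaced (θ : Γ → Γ → ℤ) : Prop :=
  ∀ a b : Γ, a ≠ b → θ a b = 0 ∨ θ a b = -1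

/-- All closed intervals are finite. -/
def LocallyFinitePoset (α : Type*) [PartialOrder α] : Prop :=
  ∀ x y : α, (Set.Icc x y).Finite

/-- A poset is connected if it cannot be written as a disjoint union of two nonempty
subposets with no comparabilities between them. -/
def ConnectedPoset (α : Type*) [PartialOrder α] : Prop :=
  ∀ S : Set α, S.Nonempty → Sᶜ.Nonempty → ∃ x ∈ S, ∃ y ∈ Sᶜ, x ≤ y ∨ y ≤ x

section
variable [PartialOrder P]

/-- (EC) Elements with equal colors are comparable. -/
def ColoredEC (κ : P → Γ) : Prop := ∀ x y : P, κ x = κ y → x ≤ y ∨ y ≤ x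

/-- (NA) Neighbors have adjacent colors. -/
def ColoredNA (θ : Γ → Γ → ℤ) (κ : P → Γ) : Prop :=
  ∀ x y : P, x ⋖ y → AdjColor θ (κ x) (κ y)

/-- (AC) Elements with adjacent colors are comparable. -/
def ColoredAC (θ : Γ → Γ → ℤ) (κ : P → Γ) : Prop :=
  ∀ x y : P, AdjColor θ (κ x) (κ y) → x ≤ y ∨ y ≤ x

/-- (ICE2) Between consecutive elements of a color `a`, the census of colors
adjacent to `a` is two. -/
def ColoredICE2 (θ : Γ → Γ → ℤ) (κ : P → Γ) : Prop :=
  ∀ (a : Γ) (x y : P), κ x = a → κ y = a → x < y → (∀ z ∈ Set.Ioo x y, κ z ≠ a) →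
    (∑ᶠ z ∈ Set.Ioo x y, -θ (κ z) a) = 2

/-- `U(x,P)`: elements above `x` with color adjacent to that of `x`. -/
def USet (θ : Γ → Γ → ℤ) (κ : P → Γ) (x : P) : Set P :=
  {y : P | x < y ∧ AdjColor θ (κ y) (κ x)}

/-- `L(x,P)`: elements below `x` with color adjacent to that of `x`. -/
def LSet (θ : Γ → Γ → ℤ) (κ : P → Γ) (x : P) : Set P :=
  {y : P | y < x ∧ AdjColor θ (κ y) (κ x)}

/-- (UCB1) Upper frontier census bound. -/
def ColoredUCB1 (θ : Γ → Γ → ℤ) (κ : P → Γ) : Prop :=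
  ∀ x : P, (∀ y : P, κ y = κ x → ¬x < y) →
    (USet θ κ x).Finite ∧ (∑ᶠ y ∈ USet θ κ x, -θ (κ y) (κ x)) ≤ 1

/-- (LCB1) Lower frontier census bound. -/
def ColoredLCB1 (θ : Γ → Γ → ℤ) (κ : P → Γ) : Prop :=
  ∀ x : P, (∀ y : P, κ y = κ x → ¬y < x) →
    (LSet θ κ x).Finite ∧ (∑ᶠ y ∈ LSet θ κ x, -θ (κ y) (κ x)) ≤ 1

/-- A Γ-colored d-complete poset: locally finite, surjectively colored, and
satisfying EC, NA, AC, ICE2, and UCB1. -/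
def GColoredDComplete (θ : Γ → Γ → ℤ) (κ : P → Γ) : Prop :=
  LocallyFinitePoset P ∧ Function.Surjective κ ∧ ColoredEC κ ∧ ColoredNA θ κ ∧
    ColoredAC θ κ ∧ ColoredICE2 θ κ ∧ ColoredUCB1 θ κ

/-- A Γ-colored minuscule poset: Γ-colored d-complete and LCB1. -/
def GColoredMinuscule (θ : Γ → Γ → ℤ) (κ : P → Γ) : Prop :=
  GColoredDComplete θ κ ∧ ColoredLCB1 θ κ

/-- The top tree: the set of elements maximal in their color class. -/
def TopTree (κ : P → Γ) : Set P := {x : P | ∀ y : P, κ y = κ x → ¬x < y}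

/-- `x` is covered by `y` within the subposet `S`. -/
def CoversIn (S : Set P) (x y : P) : Prop :=
  x ∈ S ∧ y ∈ S ∧ x < y ∧ ∀ z ∈ S, x < z → ¬z < y

/-- Slant irreducibility of a Γ-colored d-complete poset. -/
def SlantIrreducible (κ : P → Γ) : Prop :=
  ConnectedPoset P ∧ ∀ x y : P, CoversIn (TopTree κ) x y → ∃ z : P, z ≠ y ∧ κ z = κ y

/-- A saturated chain in a subposet `S`: a chain that is convex in `S`. -/
def SaturatedChainIn (S C : Set P) : Prop :=
  C ⊆ S ∧ IsChain (· ≤ ·) C ∧ ∀ x ∈ C, ∀ y ∈ C, ∀ z ∈ S, x < z → z < y → z ∈ C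

/-- The lower frontier census at the element `y`. -/
noncomputable def LCensus (θ : Γ → Γ → ℤ) (κ : P → Γ) (y : P) : ℤ :=
  ∑ᶠ x ∈ LSet θ κ y, -θ (κ x) (κ y)

/-- A full heap: locally finite, surjectively colored, EC, NA, AC, ICE2, and every
color class order-isomorphic to ℤ. -/
def FullHeap (θ : Γ → Γ → ℤ) (κ : P → Γ) : Prop :=
  LocallyFinitePoset P ∧ Function.Surjective κ ∧ ColoredEC κ ∧ ColoredNA θ κ ∧
    ColoredAC θ κ ∧ ColoredICE2 θ κ ∧ ∀ a : Γ, Nonempty ({x : P // κ x = a} ≃o ℤ)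

end

/-- `ι` realizes the colored poset `A` as an order filter of the colored poset `B`. -/
def FilterEmbedding {G : Type*} {A B : Type*} [PartialOrder A] [PartialOrder B]
    (κ : A → G) (κ' : B → G) (ι : A → B) : Prop :=
  (∀ p q : A, ι p ≤ ι q ↔ p ≤ q) ∧ (∀ p : A, κ' (ι p) = κ p) ∧ IsUpperSet (Set.range ι)

/-- `B` is an extension of `A` by the color `a`, with extending element `x`. -/
def IsExtensionBy {G : Type*} {A B : Type*} [PartialOrder A] [PartialOrder B]
    (θ : G → G → ℤ) (κ : A → G) (κ' : B → G) (a : G) (ι : A → B) (x : B) : Prop :=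
  Finite B ∧ GColoredDComplete θ κ' ∧ ConnectedPoset B ∧
    FilterEmbedding κ κ' ι ∧ (Set.range ι)ᶜ = {x} ∧ κ' x = a

/-!
Every element is maximal in its color. Otherwise take `x` highest among the elements that are
not, `y` the next element of color `κ x` above it, and `u` the unique cover of `x`. As `u` is
maximal in its color and the diagram is simply laced, UCB1 makes `U(u)` a subsingleton; it
contains `y` and the cover of `u`, so `(x, y) ⊆ {u}` and the census in ICE2 is at most one, not
two. Once every element is maximal in its color, the same subsingleton property shows that each
element of `L(y)` is covered by `y`, so the census at `y` is the number of its lower covers, and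
EC makes the coloring injective.
-/

lemma AdjColor.ne {θ : Γ → Γ → ℤ} (hθ : DynkinDatum θ) {a b : Γ} (h : AdjColor θ a b) :
    a ≠ b := by
  rintro rfl
  have := hθ.1 a
  unfold AdjColor at h
  omega

lemma AdjColor.symm {θ : Γ → Γ → ℤ} (hθ : DynkinDatum θ) {a b : Γ} (h : AdjColor θ a b) :
    AdjColor θ b a := by
  have hab := h.ne hθ
  have hba := (hθ.2.2 a b hab).not.mp (LT.lt.ne h)
  exact (hθ.2.1 b a hab.symm).lt_of_ne hba

lemma SimplyLaced.neg_eq_one {θ : Γ → Γ → ℤ} (hsl : SimplyLaced θ) (hθ : DynkinDatum θ)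
    {a b : Γ} (h : AdjColor θ a b) : -θ a b = 1 := by
  rcases hsl a b (h.ne hθ) with h0 | h0 <;> unfold AdjColor at h <;> omega

lemma finsum_mem_one_eq_ncard {α : Type*} (S : Set α) : ∑ᶠ x ∈ S, (1 : ℤ) = S.ncard := by
  rcases S.finite_or_infinite with hS | hS
  · rw [finsum_mem_eq_finite_toFinset_sum _ hS, Set.ncard_eq_toFinset_card S hS]
    simp
  · rw [finsum_mem_eq_zero_of_infinite (by simpa [Function.support_const] using hS), hS.ncard]
    simp

lemma finsum_neg_theta_eq_ncard {θ : Γ → Γ → ℤ} {κ : P → Γ} (hθ : DynkinDatum θ)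
    (hsl : SimplyLaced θ) {S : Set P}
    {a : Γ} (hS : ∀ x ∈ S, AdjColor θ (κ x) a) :
    ∑ᶠ x ∈ S, -θ (κ x) a = S.ncard := by
  rw [finsum_mem_congr rfl fun x hx => hsl.neg_eq_one hθ (hS x hx), finsum_mem_one_eq_ncard]

section ColoredPoset

variable [PartialOrder P] {θ : Γ → Γ → ℤ} {κ : P → Γ}

lemma USet_subsingleton (hθ : DynkinDatum θ) (hsl : SimplyLaced θ) (hucb : ColoredUCB1 θ κ)
    {x : P} (hx : x ∈ TopTree κ) : (USet θ κ x).Subsingleton := by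
  obtain ⟨hfin, hle⟩ := hucb x hx
  rw [finsum_neg_theta_eq_ncard hθ hsl fun y hy => hy.2] at hle
  have := hfin.to_subtype
  exact Set.ncard_le_one_iff_subsingleton.mp (by exact_mod_cast hle)

lemma CovBy.mem_USet (hθ : DynkinDatum θ) (hna : ColoredNA θ κ) {x u : P} (h : x ⋖ u) :
    u ∈ USet θ κ x :=
  ⟨h.lt, (hna x u h).symm hθ⟩

lemma CovBy.le_of_lt_of_isChain_Ici {x u z : P} (hch : IsChain (· ≤ ·) (Set.Ici x))
    (hu : x ⋖ u) (hz : x < z) : u ≤ z := by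
  rcases hch.total (Set.mem_Ici.mpr hu.le) (Set.mem_Ici.mpr hz.le) with h | h
  · exact h
  · rcases h.lt_or_eq with h | rfl
    · exact absurd h (hu.2 hz)
    · exact le_rfl

lemma mem_topTree_of_isChain_Ici [WellFoundedLT P] [WellFoundedGT P] (hθ : DynkinDatum θ)
    (hsl : SimplyLaced θ) (hna : ColoredNA θ κ) (hice : ColoredICE2 θ κ)
    (hucb : ColoredUCB1 θ κ) (hch : ∀ x : P, IsChain (· ≤ ·) (Set.Ici x)) (x : P) :
    x ∈ TopTree κ := by
  induction x using WellFoundedGT.induction with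
  | _ x ih =>
  intro y₀ hcol₀ hxy₀
  obtain ⟨y, ⟨hcol, hxy⟩, hmin⟩ :=
    exists_minimal_of_wellFoundedLT (fun y => κ y = κ x ∧ x < y) ⟨y₀, hcol₀, hxy₀⟩
  obtain ⟨u, hxu, -⟩ := exists_covBy_le_of_lt hxy
  -- `y` and the cover of any `z ∈ (u, y)` would be two elements of the subsingleton `U(u)`.
  have hIoo : Set.Ioo x y ⊆ {u} := by
    intro z ⟨hxz, hzy⟩
    rcases (hxu.le_of_lt_of_isChain_Ici (hch x) hxz).lt_or_eq with huz | rfl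
    · obtain ⟨w, huw, hwz⟩ := exists_covBy_le_of_lt huz
      have hyU : y ∈ USet θ κ u := ⟨huz.trans hzy, hcol ▸ hna x u hxu⟩
      have hwy := USet_subsingleton hθ hsl hucb (ih u hxu.lt) (huw.mem_USet hθ hna) hyU
      exact absurd (hwz.trans_lt hzy) (hwy ▸ lt_irrefl y)
    · rfl
  have hcensus := hice (κ x) x y rfl hcol hxy
    fun z hz hzx => hmin ⟨hzx, hz.1⟩ hz.2.le |>.not_gt hz.2
  rw [finsum_neg_theta_eq_ncard hθ hsl fun z hz => (hIoo hz ▸ hxu.mem_USet hθ hna).2] at hcensus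
  have := Set.ncard_le_ncard hIoo
  rw [Set.ncard_singleton] at this
  omega

lemma injective_of_forall_mem_topTree (hec : ColoredEC κ) (htop : ∀ x : P, x ∈ TopTree κ) :
    Function.Injective κ := by
  intro x y hxy
  rcases (hec x y hxy).imp lt_or_eq_of_le lt_or_eq_of_le with (h | h) | (h | h)
  · exact absurd h (htop x y hxy.symm)
  · exact h
  · exact absurd h (htop y x hxy)
  · exact h.symm

lemma LSet_eq_covBy [IsStronglyAtomic P] (hθ : DynkinDatum θ) (hsl : SimplyLaced θ)
    (hna : ColoredNA θ κ) (hucb : ColoredUCB1 θ κ) (htop : ∀ x : P, x ∈ TopTree κ) (y : P) :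
    LSet θ κ y = {x | x ⋖ y} := by
  ext x
  refine ⟨fun ⟨hxy, hadj⟩ => ?_, fun h => ⟨h.lt, hna x y h⟩⟩
  obtain ⟨u, hxu, -⟩ := exists_covBy_le_of_lt hxy
  have huy := USet_subsingleton hθ hsl hucb (htop x) (hxu.mem_USet hθ hna) ⟨hxy, hadj.symm hθ⟩
  exact huy ▸ hxu

lemma LCensus_eq_ncard_covBy [IsStronglyAtomic P] (hθ : DynkinDatum θ) (hsl : SimplyLaced θ)
    (hna : ColoredNA θ κ) (hucb : ColoredUCB1 θ κ) (htop : ∀ x : P, x ∈ TopTree κ) (y : P) :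
    LCensus θ κ y = {x | x ⋖ y}.ncard := by
  rw [LCensus, LSet_eq_covBy hθ hsl hna hucb htop,
    finsum_neg_theta_eq_ncard (S := {x | x ⋖ y}) hθ hsl fun x hx => hna x y hx]

end ColoredPoset

theorem topTree_census_general [PartialOrder P] [Fintype P]
    (θ : Γ → Γ → ℤ) (κ : P → Γ) (hθ : DynkinDatum θ) (hsl : SimplyLaced θ)
    (hdc : GColoredDComplete θ κ)
    (hch : ∀ x : P, IsChain (· ≤ ·) (Set.Ici x))
    (s : P) (hs : {x : P | x ⋖ s}.ncard = 2)
    (hother : ∀ t : P, t ≠ s → {x : P | x ⋖ t}.ncard ≤ 1) :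
    ∀ b : Γ, ∀ y : P, κ y = b → (∀ z : P, κ z = b → y ≤ z) →
      LCensus θ κ y ≤ 2 ∧ (LCensus θ κ y = 2 ↔ b = κ s) := by
  obtain ⟨-, -, hec, hna, -, hice, hucb⟩ := hdc
  have htop := mem_topTree_of_isChain_Ici hθ hsl hna hice hucb hch
  intro b y hyb _
  rw [LCensus_eq_ncard_covBy hθ hsl hna hucb htop, ← hyb]
  by_cases hys : y = s
  · subst hys
    simp [hs]
  · have hle := hother y hys
    have hcol : κ y ≠ κ s := (injective_of_forall_mem_topTree hec htop).ne hys
    refine ⟨by omega, ?_⟩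
    simp only [hcol, iff_false]
    omega

/-- For a connected finite Γ-colored d-complete poset with Γ simply
laced that is its own top tree, with a unique element s covering two elements and all
other elements covering at most one, every lower frontier census is ≤ 2 and equals 2
exactly at the color of s. -/
theorem topTree_census [Fintype Γ] [PartialOrder P] [Fintype P] [Nonempty P]
    (θ : Γ → Γ → ℤ) (κ : P → Γ) (hθ : DynkinDatum θ) (hsl : SimplyLaced θ)
    (hdc : GColoredDComplete θ κ) (hconn : ConnectedPoset P)
    (hch : ∀ x : P, IsChain (· ≤ ·) (Set.Ici x))
    (s : P) (hs : {x : P | x ⋖ s}.ncard = 2)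
    (hother : ∀ t : P, t ≠ s → {x : P | x ⋖ t}.ncard ≤ 1) :
    ∀ b : Γ, ∀ y : P, κ y = b → (∀ z : P, κ z = b → y ≤ z) →
      LCensus θ κ y ≤ 2 ∧ (LCensus θ κ y = 2 ↔ b = κ s) :=
  topTree_census_general θ κ hθ hsl hdc hch s hs hother
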